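/- arXiv:1708.03440 — 4 statements merged into one kernel-verified Lean document; each statement's English description precedes it below -/
import Mathlib

section
/- Let n > k ≥ 1 be integers, λ_1,…,λ_n pairwise distinct nonzero complex numbers, and A = (a_{ij}) an n×k complex matrix of rank k. In ℂ((z)) define u_j = z^{-(k-1)} Σ_{i=1}^n a_{ij} Σ_{r≥0} λ_i^r z^r for 1 ≤ j ≤ k. Then the ℂ-linear span of {u_1,…,u_k} ∪ {z^{-l} : l ≥ k} is a point of the Sato Grassmannian UGM. -/
set_option synthInstance.maxHeartbeats 1000000
set_option maxHeartbeats 1000000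

noncomputable section

/- Shortcut instances to speed up instance search for submodules of `ℂ((z))`. -/
instance (U : Submodule ℂ (LaurentSeries ℂ)) : AddCommGroup U := inferInstance
instance (U : Submodule ℂ (LaurentSeries ℂ)) : Module ℂ U := inferInstance

/-- The variable `z` in the field of formal Laurent series `ℂ((z))`. -/
def zL : LaurentSeries ℂ := HahnSeries.single 1 1

/-- Truncation: keep only the coefficients of nonpositive powers of `z`.
This is the projection onto `V_φ = ℂ[z⁻¹]` along `V₀ = zℂ[[z]]`. -/
def trunc : LaurentSeries ℂ →ₗ[ℂ] LaurentSeries ℂ where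
  toFun f :=
    { coeff := fun n => if n ≤ 0 then f.coeff n else 0
      isPWO_support' := f.isPWO_support.mono (by
        intro n hn
        simp only [Function.mem_support] at hn ⊢
        intro h
        apply hn
        simp [h]) }
  map_add' f g := by
    ext n
    by_cases h : n ≤ 0 <;> simp [HahnSeries.coeff_add, h]
  map_smul' c f := by
    ext n
    by_cases h : n ≤ 0 <;> simp [HahnSeries.coeff_smul, h]

/-- `V_φ = ℂ[z⁻¹]`, realized as the range of the truncation map. -/
def Vphi : Submodule ℂ (LaurentSeries ℂ) := LinearMap.range trunc

/-- The projection `π : ℂ((z)) → V_φ` restricted to a subspace `U`. -/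
def projU (U : Submodule ℂ (LaurentSeries ℂ)) : U →ₗ[ℂ] Vphi :=
  trunc.rangeRestrict.comp U.subtype

/-- The Sato Grassmannian: subspaces `U ⊆ ℂ((z))` such that the kernel and the
cokernel of `π|_U : U → V_φ` are finite dimensional of the same dimension. -/
def UGM : Set (Submodule ℂ (LaurentSeries ℂ)) :=
  {U | FiniteDimensional ℂ (LinearMap.ker (projU U)) ∧
       FiniteDimensional ℂ (Vphi ⧸ LinearMap.range (projU U)) ∧
       Module.finrank ℂ (LinearMap.ker (projU U)) =
         Module.finrank ℂ (Vphi ⧸ LinearMap.range (projU U))}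

/-! Write `Φ b = ∑ⱼ bⱼ uⱼ` and `Q = z^{-k} ℂ[z⁻¹]`, so that the span is `U = Φ(ℂᵏ) + Q`.
The coefficient of `z^{r+1-k}` in `Φ b` is `∑ᵢ (A b)ᵢ λᵢ^r`, so `Φ` is injective by the
invertibility of the Vandermonde matrix of the distinct `λᵢ` and the injectivity of `A`. Since
`V_φ = Q ⊕ span(1, …, z^{-(k-1)})`, `π` is the identity on `Q` and `π (Φ b)` lies in
`span(1, …, z^{-(k-1)})`, the map `π|_U` is `T ⊕ id` for the endomorphism `T` of `ℂᵏ` recording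
the coefficients of `z⁰, …, z^{-(k-1)}` of `Φ b`. Hence `ker π|_U ≅ ker T` and
`coker π|_U ≅ coker T`, which have the same dimension by rank–nullity. -/

open HahnSeries

theorem Matrix.mulVec_injective_of_rank_eq_card {K m n : Type*} [Field K] [Fintype m]
    [Fintype n] {A : Matrix m n K} (hA : A.rank = Fintype.card n) :
    Function.Injective A.mulVec := by
  have hker : Module.finrank K (LinearMap.ker A.mulVecLin) = 0 := by
    have := LinearMap.finrank_range_add_finrank_ker A.mulVecLin
    rw [Module.finrank_fintype_fun_eq_card] at this
    rw [Matrix.rank] at hA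
    omega
  exact LinearMap.ker_eq_bot.mp (Submodule.finrank_eq_zero.mp hker)

theorem LinearMap.finrank_ker_eq_finrank_quotient_range {K V : Type*} [Field K]
    [AddCommGroup V] [Module K V] [FiniteDimensional K V] (T : V →ₗ[K] V) :
    Module.finrank K (LinearMap.ker T) = Module.finrank K (V ⧸ LinearMap.range T) := by
  have := T.finrank_range_add_finrank_ker
  have := (LinearMap.range T).finrank_quotient_add_finrank
  omega

namespace LaurentSeries

theorem coeff_coe_powerSeries_of_neg {R : Type*} [Semiring R] (x : PowerSeries R) {m : ℤ}
    (hm : m < 0) : (x : LaurentSeries R).coeff m = 0 := by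
  rw [ofPowerSeries_apply, embDomain_of_notMem_range]
  rintro ⟨r, rfl⟩
  exact absurd hm (by simp)

theorem inv_one_sub_C_mul_X {K : Type*} [Field K] (c : K) :
    (1 - algebraMap K (LaurentSeries K) c * single 1 1)⁻¹ =
      ((PowerSeries.mk (c ^ ·) : PowerSeries K) : LaurentSeries K) := by
  have hgeom : PowerSeries.mk (c ^ ·) * (1 - PowerSeries.C c * PowerSeries.X) = 1 := by
    simpa [PowerSeries.rescale_mk] using
      congrArg (PowerSeries.rescale c) (PowerSeries.mk_one_mul_one_sub_eq_one K)
  refine inv_eq_of_mul_eq_one_right ?_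
  rw [mul_comm, ← ofPowerSeries_X, HahnSeries.algebraMap_apply', ← map_mul,
    ← map_one (ofPowerSeries ℤ K), ← map_sub, ← map_mul]
  exact congrArg (ofPowerSeries ℤ K) hgeom

section vanishingAbove

variable (R : Type*) [Ring R]

def vanishingAbove (N : ℤ) : Submodule R (LaurentSeries R) where
  carrier := {f | ∀ m, N < m → f.coeff m = 0}
  zero_mem' _ _ := coeff_zero
  add_mem' hf hg m hm := by rw [coeff_add, hf m hm, hg m hm, add_zero]
  smul_mem' c f hf m hm := by rw [coeff_smul, hf m hm, smul_zero]

variable {R}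

theorem vanishingAbove_mono {N N' : ℤ} (h : N ≤ N') : vanishingAbove R N ≤ vanishingAbove R N' :=
  fun _ hf m hm => hf m (h.trans_lt hm)

theorem eq_sum_single_Icc {N : ℤ} {f : LaurentSeries R} (hf : f ∈ vanishingAbove R N) :
    f = ∑ m ∈ Finset.Icc f.order N, single m (f.coeff m) := by
  ext m
  rw [coeff_sum, Finset.sum_eq_single m (fun j _ hj => coeff_single_of_ne hj.symm)]
  · simp
  · intro hm
    rw [Finset.mem_Icc, not_and_or, not_le, not_le] at hm
    rcases hm with hm | hm
    · simp [coeff_eq_zero_of_lt_order hm]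
    · simp [hf m hm]

end vanishingAbove

section nonposCoeffs

variable {R : Type*} [Ring R] (k : ℕ)

def nonposCoeffs : LaurentSeries R →ₗ[R] Fin k → R :=
  LinearMap.pi fun s => HahnSeries.coeff.linearMap (-(s : ℤ))

def ofNonposCoeffs : (Fin k → R) →ₗ[R] LaurentSeries R :=
  Fintype.linearCombination R fun s => single (-(s : ℤ)) 1

variable {k}

theorem nonposCoeffs_apply (f : LaurentSeries R) (s : Fin k) :
    nonposCoeffs k f s = f.coeff (-(s : ℤ)) :=
  rfl

theorem exists_eq_neg_fin {m : ℤ} (h₁ : -(k : ℤ) < m) (h₂ : m ≤ 0) :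
    ∃ s : Fin k, m = -(s : ℤ) :=
  ⟨⟨(-m).toNat, by omega⟩, by simp only; omega⟩

theorem coeff_ofNonposCoeffs (c : Fin k → R) (m : ℤ) :
    (ofNonposCoeffs k c).coeff m = ∑ s : Fin k, if m = -(s : ℤ) then c s else 0 := by
  simp [ofNonposCoeffs, Fintype.linearCombination_apply, coeff_sum, coeff_single]

theorem coeff_ofNonposCoeffs_neg (c : Fin k → R) (s : Fin k) :
    (ofNonposCoeffs k c).coeff (-(s : ℤ)) = c s := by
  rw [coeff_ofNonposCoeffs, Finset.sum_eq_single s (fun t _ hts => if_neg ?_) (by simp),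
    if_pos rfl]
  exact fun h => hts (Fin.ext (by omega))

theorem coeff_ofNonposCoeffs_eq_zero (c : Fin k → R) {m : ℤ} (hm : m ≤ -k ∨ 0 < m) :
    (ofNonposCoeffs k c).coeff m = 0 := by
  rw [coeff_ofNonposCoeffs]
  exact Finset.sum_eq_zero fun s _ => if_neg (by omega)

theorem nonposCoeffs_ofNonposCoeffs (c : Fin k → R) : nonposCoeffs k (ofNonposCoeffs k c) = c :=
  funext (coeff_ofNonposCoeffs_neg c)

theorem ofNonposCoeffs_mem_vanishingAbove (c : Fin k → R) :
    ofNonposCoeffs k c ∈ vanishingAbove R 0 :=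
  fun _ hm => coeff_ofNonposCoeffs_eq_zero c (Or.inr hm)

theorem nonposCoeffs_eq_zero {q : LaurentSeries R} (hq : q ∈ vanishingAbove R (-k)) :
    nonposCoeffs k q = 0 :=
  funext fun s => hq _ (by omega)

theorem sub_ofNonposCoeffs_mem {f : LaurentSeries R} (hf : f ∈ vanishingAbove R 0) :
    f - ofNonposCoeffs k (nonposCoeffs k f) ∈ vanishingAbove R (-k) := by
  intro m hm
  rw [coeff_sub]
  by_cases hm₀ : m ≤ 0
  · obtain ⟨s, rfl⟩ := exists_eq_neg_fin hm hm₀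
    rw [coeff_ofNonposCoeffs_neg, nonposCoeffs_apply, sub_self]
  · rw [hf m (by omega), coeff_ofNonposCoeffs_eq_zero _ (Or.inr (by omega)), sub_zero]

end nonposCoeffs

end LaurentSeries

open LaurentSeries

theorem zL_zpow (m : ℤ) : zL ^ m = single m 1 :=
  (RatFunc.single_zpow m).symm

theorem trunc_coeff (f : LaurentSeries ℂ) (m : ℤ) :
    (trunc f).coeff m = if m ≤ 0 then f.coeff m else 0 :=
  rfl

theorem trunc_eq_self {f : LaurentSeries ℂ} (hf : f ∈ vanishingAbove ℂ 0) : trunc f = f := by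
  ext m
  rw [trunc_coeff]
  split_ifs with hm
  · rfl
  · exact (hf m (not_le.mp hm)).symm

theorem trunc_eq_ofNonposCoeffs {k : ℕ} {f : LaurentSeries ℂ}
    (hf : ∀ m < 1 - (k : ℤ), f.coeff m = 0) : trunc f = ofNonposCoeffs k (nonposCoeffs k f) := by
  ext m
  rw [trunc_coeff]
  by_cases hm₀ : m ≤ 0
  · rw [if_pos hm₀]
    by_cases hm : -(k : ℤ) < m
    · obtain ⟨s, rfl⟩ := exists_eq_neg_fin hm hm₀
      rw [coeff_ofNonposCoeffs_neg, nonposCoeffs_apply]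
    · rw [hf m (by omega), coeff_ofNonposCoeffs_eq_zero _ (Or.inl (by omega))]
  · rw [if_neg hm₀, coeff_ofNonposCoeffs_eq_zero _ (Or.inr (by omega))]

theorem Vphi_eq : Vphi = vanishingAbove ℂ 0 := by
  ext f
  constructor
  · rintro ⟨g, rfl⟩ m hm
    rw [trunc_coeff, if_neg (not_le.mpr hm)]
  · exact fun hf => ⟨f, trunc_eq_self hf⟩

theorem span_zpow_neg (k : ℕ) :
    Submodule.span ℂ {f | ∃ l : ℕ, k ≤ l ∧ f = zL ^ (-(l : ℤ))} = vanishingAbove ℂ (-k) := by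
  apply le_antisymm
  · rw [Submodule.span_le]
    rintro _ ⟨l, hl, rfl⟩ m hm
    rw [zL_zpow, coeff_single_of_ne (by omega)]
  · intro f hf
    rw [eq_sum_single_Icc hf]
    refine Submodule.sum_mem _ fun m hm => ?_
    have hmk : m ≤ -k := (Finset.mem_Icc.mp hm).2
    have hsingle : single m (f.coeff m) = f.coeff m • zL ^ m := by
      rw [zL_zpow, ← single_zero_mul_eq_smul, single_mul_single, zero_add, mul_one]
    rw [hsingle]
    exact Submodule.smul_mem _ _ (Submodule.subset_span ⟨(-m).toNat, by omega, by congr; omega⟩)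

namespace SolitonFrame

open Matrix

variable {n k : ℕ} (lam : Fin n → ℂ) (A : Matrix (Fin n) (Fin k) ℂ)

def frameVector (j : Fin k) : LaurentSeries ℂ :=
  zL ^ (-((k : ℤ) - 1)) *
    ∑ i : Fin n, algebraMap ℂ (LaurentSeries ℂ) (A i j) *
      (1 - algebraMap ℂ (LaurentSeries ℂ) (lam i) * zL)⁻¹

def frame : (Fin k → ℂ) →ₗ[ℂ] LaurentSeries ℂ :=
  Fintype.linearCombination ℂ (frameVector lam A)

theorem frame_apply (b : Fin k → ℂ) :
    frame lam A b = single (1 - k : ℤ) 1 *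
      ((PowerSeries.mk fun r => ∑ i, (A *ᵥ b) i * lam i ^ r : PowerSeries ℂ) :
        LaurentSeries ℂ) := by
  have hseries : (PowerSeries.mk fun r => ∑ i, (A *ᵥ b) i * lam i ^ r) =
      ∑ j, PowerSeries.C (b j) * ∑ i, PowerSeries.C (A i j) * PowerSeries.mk (lam i ^ ·) := by
    ext r
    simp only [PowerSeries.coeff_mk, map_sum, PowerSeries.coeff_C_mul, mulVec, dotProduct,
      Finset.sum_mul, Finset.mul_sum]
    rw [Finset.sum_comm]
    exact Finset.sum_congr rfl fun _ _ => Finset.sum_congr rfl fun _ _ => by ring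
  simp only [frame, Fintype.linearCombination_apply, frameVector, zL, ← RatFunc.single_zpow,
    LaurentSeries.inv_one_sub_C_mul_X, neg_sub]
  simp only [hseries, HahnSeries.algebraMap_apply', map_sum, map_mul, Finset.mul_sum,
    Finset.smul_sum]
  refine Finset.sum_congr rfl fun j _ => Finset.sum_congr rfl fun i _ => ?_
  rw [ofPowerSeries_C, ← C_mul_eq_smul, mul_left_comm]
  rfl

theorem frame_coeff_of_lt (b : Fin k → ℂ) {m : ℤ} (hm : m < 1 - k) :
    (frame lam A b).coeff m = 0 := by
  rw [frame_apply, coeff_single_mul, one_mul, coeff_coe_powerSeries_of_neg _ (by omega)]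

theorem frame_coeff_add (b : Fin k → ℂ) (r : ℕ) :
    (frame lam A b).coeff (r + (1 - k)) = ∑ i, (A *ᵥ b) i * lam i ^ r := by
  rw [frame_apply, coeff_single_mul_add, one_mul, coeff_coe_powerSeries, PowerSeries.coeff_mk]

theorem frame_injective (hinj : Function.Injective lam) (hA : A.rank = k) :
    Function.Injective (frame lam A) := by
  refine (injective_iff_map_eq_zero _).mpr fun b hb => ?_
  have hAb : A *ᵥ b = 0 := eq_zero_of_forall_pow_sum_mul_pow_eq_zero hinj fun r => by
    rw [← frame_coeff_add, hb, coeff_zero]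
  exact mulVec_injective_of_rank_eq_card (by rwa [Fintype.card_fin])
    (hAb.trans (mulVec_zero A).symm)

def frameCoords : (Fin k → ℂ) →ₗ[ℂ] Fin k → ℂ :=
  nonposCoeffs k ∘ₗ frame lam A

theorem trunc_frame_add (b : Fin k → ℂ) {q : LaurentSeries ℂ} (hq : q ∈ vanishingAbove ℂ (-k)) :
    trunc (frame lam A b + q) = ofNonposCoeffs k (frameCoords lam A b) + q := by
  rw [map_add, trunc_eq_ofNonposCoeffs fun _ => frame_coeff_of_lt lam A b,
    trunc_eq_self (vanishingAbove_mono (by omega) hq)]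
  rfl

def frameSpan : Submodule ℂ (LaurentSeries ℂ) :=
  Submodule.span ℂ (Set.range (frameVector lam A) ∪ {f | ∃ l : ℕ, k ≤ l ∧ f = zL ^ (-(l : ℤ))})

theorem frameSpan_eq :
    frameSpan lam A = LinearMap.range (frame lam A) ⊔ vanishingAbove ℂ (-k) := by
  rw [frameSpan, Submodule.span_union, span_zpow_neg, frame, Fintype.range_linearCombination]

theorem mem_frameSpan {x : LaurentSeries ℂ} :
    x ∈ frameSpan lam A ↔ ∃ b, x - frame lam A b ∈ vanishingAbove ℂ (-k) := by
  rw [frameSpan_eq, Submodule.mem_sup]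
  constructor
  · rintro ⟨_, ⟨b, rfl⟩, q, hq, rfl⟩
    exact ⟨b, by rwa [add_sub_cancel_left]⟩
  · rintro ⟨b, hq⟩
    exact ⟨_, ⟨b, rfl⟩, _, hq, add_sub_cancel _ _⟩

theorem frame_mem_frameSpan (b : Fin k → ℂ) : frame lam A b ∈ frameSpan lam A :=
  (mem_frameSpan lam A).mpr ⟨b, by rw [sub_self]; exact zero_mem _⟩

theorem ker_projU_eq_map :
    LinearMap.ker (projU (frameSpan lam A)) = (LinearMap.ker (frameCoords lam A)).map
      ((frame lam A).codRestrict _ (frame_mem_frameSpan lam A)) := by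
  ext ⟨x, hx⟩
  simp only [LinearMap.mem_ker, Submodule.mem_map, Subtype.ext_iff, LinearMap.codRestrict_apply]
  constructor
  · intro htrunc
    obtain ⟨b, hq⟩ := (mem_frameSpan lam A).mp hx
    have hzero : ofNonposCoeffs k (frameCoords lam A b) + (x - frame lam A b) = 0 := by
      rw [← trunc_frame_add lam A b hq, add_sub_cancel]
      exact htrunc
    have hb : frameCoords lam A b = 0 := by
      simpa [nonposCoeffs_ofNonposCoeffs, nonposCoeffs_eq_zero hq] using
        congrArg (nonposCoeffs k) hzero
    rw [hb, map_zero, zero_add, sub_eq_zero] at hzero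
    exact ⟨b, hb, hzero.symm⟩
  · rintro ⟨b, hb, rfl⟩
    show trunc (frame lam A b) = 0
    rw [← add_zero (frame lam A b), trunc_frame_add lam A b (zero_mem _), hb, map_zero, add_zero]

def cokernelMap : Vphi →ₗ[ℂ] (Fin k → ℂ) ⧸ LinearMap.range (frameCoords lam A) :=
  (LinearMap.range (frameCoords lam A)).mkQ ∘ₗ nonposCoeffs k ∘ₗ Vphi.subtype

theorem cokernelMap_surjective : Function.Surjective (cokernelMap lam A) := fun y => by
  obtain ⟨c, rfl⟩ := Submodule.mkQ_surjective _ y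
  exact ⟨⟨ofNonposCoeffs k c, Vphi_eq ▸ ofNonposCoeffs_mem_vanishingAbove c⟩,
    congrArg _ (nonposCoeffs_ofNonposCoeffs c)⟩

theorem range_projU_eq_ker :
    LinearMap.range (projU (frameSpan lam A)) = LinearMap.ker (cokernelMap lam A) := by
  ext ⟨f, hf⟩
  simp only [LinearMap.mem_range, LinearMap.mem_ker, cokernelMap, LinearMap.coe_comp,
    Function.comp_apply, Submodule.subtype_apply, Submodule.mkQ_apply,
    Submodule.Quotient.mk_eq_zero]
  constructor
  · rintro ⟨⟨x, hx⟩, hxf⟩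
    obtain ⟨b, hq⟩ := (mem_frameSpan lam A).mp hx
    have htrunc : trunc x = f := congrArg Subtype.val hxf
    refine ⟨b, ?_⟩
    rw [← htrunc, ← add_sub_cancel (frame lam A b) x, trunc_frame_add lam A b hq, map_add,
      nonposCoeffs_ofNonposCoeffs, nonposCoeffs_eq_zero hq, add_zero]
  · rintro ⟨b, hb⟩
    have hq := sub_ofNonposCoeffs_mem (k := k) (Vphi_eq ▸ hf)
    refine ⟨⟨frame lam A b + (f - ofNonposCoeffs k (nonposCoeffs k f)),
      (mem_frameSpan lam A).mpr ⟨b, by rwa [add_sub_cancel_left]⟩⟩, Subtype.ext ?_⟩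
    show trunc (frame lam A b + (f - ofNonposCoeffs k (nonposCoeffs k f))) = f
    rw [trunc_frame_add lam A b hq, hb, add_sub_cancel]

theorem frameSpan_mem_UGM (hinj : Function.Injective lam) (hA : A.rank = k) :
    frameSpan lam A ∈ UGM := by
  let eKer : LinearMap.ker (projU (frameSpan lam A)) ≃ₗ[ℂ] LinearMap.ker (frameCoords lam A) :=
    (LinearEquiv.ofEq _ _ (ker_projU_eq_map lam A)).trans
      (Submodule.equivMapOfInjective _
        (fun _ _ h => frame_injective lam A hinj hA (congrArg Subtype.val h)) _).symm
  let eCoker : (Vphi ⧸ LinearMap.range (projU (frameSpan lam A))) ≃ₗ[ℂ]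
      (Fin k → ℂ) ⧸ LinearMap.range (frameCoords lam A) :=
    (Submodule.quotEquivOfEq _ _ (range_projU_eq_ker lam A)).trans
      ((cokernelMap lam A).quotKerEquivOfSurjective (cokernelMap_surjective lam A))
  refine ⟨.equiv eKer.symm, .equiv eCoker.symm, ?_⟩
  rw [eKer.finrank_eq, eCoker.finrank_eq]
  exact (frameCoords lam A).finrank_ker_eq_finrank_quotient_range

end SolitonFrame

theorem soliton_frame_mem_UGM_general (n k : ℕ)
    (lam : Fin n → ℂ) (hinj : Function.Injective lam)
    (A : Matrix (Fin n) (Fin k) ℂ) (hA : A.rank = k) :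
    Submodule.span ℂ
      ((Set.range fun j : Fin k =>
          zL ^ (-((k : ℤ) - 1)) *
            ∑ i : Fin n, algebraMap ℂ (LaurentSeries ℂ) (A i j) *
              (1 - algebraMap ℂ (LaurentSeries ℂ) (lam i) * zL)⁻¹) ∪
        {f | ∃ l : ℕ, k ≤ l ∧ f = zL ^ (-(l : ℤ))}) ∈ UGM :=
  SolitonFrame.frameSpan_mem_UGM lam A hinj hA

/-- Sato's theorem on `(n,k)` soliton frames: the span of the
functions `z^{-(k-1)} Σ_i a_{ij} (1-λ_i z)^{-1}` (`1 ≤ j ≤ k`) together with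
`z^{-l}` (`l ≥ k`) is a point of the Sato Grassmannian. -/
theorem soliton_frame_mem_UGM (n k : ℕ) (hk : 1 ≤ k) (hkn : k < n)
    (lam : Fin n → ℂ) (hne : ∀ i, lam i ≠ 0) (hinj : Function.Injective lam)
    (A : Matrix (Fin n) (Fin k) ℂ) (hA : A.rank = k) :
    Submodule.span ℂ
      ((Set.range fun j : Fin k =>
          zL ^ (-((k : ℤ) - 1)) *
            ∑ i : Fin n, algebraMap ℂ (LaurentSeries ℂ) (A i j) *
              (1 - algebraMap ℂ (LaurentSeries ℂ) (lam i) * zL)⁻¹) ∪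
        {f | ∃ l : ℕ, k ≤ l ∧ f = zL ^ (-(l : ℤ))}) ∈ UGM :=
  soliton_frame_mem_UGM_general n k lam hinj A hA

end
end

section
/- For every integer m ≥ 0, every z ∈ ℂ, and every λ₀ ∈ ℂ with λ₀z ≠ 1, the m-th derivative of the function λ ↦ λ^m/(1−λz) at the point λ₀ equals m!/(1−λ₀z)^{m+1}. -/
/-!
By the Leibniz rule, the `m`-th derivative of `λ ^ m * (1 - λ z)⁻¹` at `λ₀` is
`∑ i, C(m, i) · m!/(m-i)! · λ₀ ^ (m-i) · (m-i)! z ^ (m-i) / (1 - λ₀ z) ^ (m-i+1)`,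
that is `m! / (1 - λ₀ z) ^ (m+1)` times `∑ i, C(m, i) (1 - λ₀ z) ^ i (λ₀ z) ^ (m-i)`,
and by the binomial theorem the last sum is `((1 - λ₀ z) + λ₀ z) ^ m = 1`.
-/

open Nat Finset

theorem iteratedDeriv_inv_one_sub_mul {𝕜 : Type*} [NontriviallyNormedField 𝕜] (k : ℕ) (z x : 𝕜) :
    iteratedDeriv k (fun l => (1 - l * z)⁻¹) x = k ! * z ^ k / (1 - x * z) ^ (k + 1) := by
  have h := congr_fun (iter_deriv_inv_linear k (-z) 1) x
  have hlin : ∀ l : 𝕜, -z * l + 1 = 1 - l * z := fun l => by ring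
  simp only [← iteratedDeriv_eq_iterate, hlin] at h
  rw [h, show (-1 - k : ℤ) = -((k + 1 : ℕ) : ℤ) by push_cast; ring, zpow_neg, zpow_natCast,
    neg_pow z, div_eq_mul_inv]
  have hsign : ((-1 : 𝕜)) ^ k * (-1) ^ k = 1 := by rw [← mul_pow]; norm_num
  linear_combination (k ! * z ^ k * ((1 - x * z) ^ (k + 1))⁻¹) * hsign

theorem contDiffAt_inv_one_sub_mul {𝕜 : Type*} [NontriviallyNormedField 𝕜] (n : WithTop ℕ∞)
    {z x : 𝕜} (h : x * z ≠ 1) : ContDiffAt 𝕜 n (fun l => (1 - l * z)⁻¹) x :=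
  (contDiffAt_const.sub (contDiffAt_id.mul contDiffAt_const)).inv (sub_ne_zero.mpr h.symm)

theorem choose_mul_descFactorial_mul_factorial_div_pow {K : Type*} [Field K] {m i : ℕ}
    (hi : i ≤ m) (z x : K) (h : x * z ≠ 1) :
    m.choose i * (m.descFactorial i * x ^ (m - i)) *
        ((m - i) ! * z ^ (m - i) / (1 - x * z) ^ (m - i + 1)) =
      m ! / (1 - x * z) ^ (m + 1) * ((1 - x * z) ^ i * (x * z) ^ (m - i) * m.choose i) := by
  have hne : 1 - x * z ≠ 0 := sub_ne_zero.mpr h.symm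
  obtain ⟨j, rfl⟩ := Nat.exists_eq_add_of_le hi
  rw [← factorial_mul_descFactorial hi, Nat.cast_mul, Nat.add_sub_cancel_left]
  field_simp
  ring

/-- for `m ≥ 0`, `z ∈ ℂ` and `λ₀z ≠ 1`, the `m`-th complex
derivative of `λ ↦ λ^m/(1-λz)` at `λ₀` equals `m!/(1-λ₀z)^{m+1}`. -/
theorem iteratedDeriv_pow_div_one_sub (m : ℕ) (z lam0 : ℂ) (h : lam0 * z ≠ 1) :
    iteratedDeriv m (fun lam : ℂ => lam ^ m / (1 - lam * z)) lam0 =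
      (m.factorial : ℂ) / (1 - lam0 * z) ^ (m + 1) := by
  simp only [div_eq_mul_inv (_ ^ m)]
  rw [iteratedDeriv_fun_mul (contDiffAt_fun_id.pow m) (contDiffAt_inv_one_sub_mul _ h)]
  simp only [iteratedDeriv_pow, iteratedDeriv_inv_one_sub_mul]
  rw [sum_congr rfl fun i hi =>
      choose_mul_descFactorial_mul_factorial_div_pow (mem_range_succ_iff.mp hi) z lam0 h,
    ← mul_sum, ← add_pow, sub_add_cancel, one_pow, mul_one]
end

section
/- Let n ≥ k ≥ 1 and M ≥ 1 be integers, λ_1,…,λ_n pairwise distinct nonzero complex numbers, and a_{ij}, b_{ij} (1 ≤ i ≤ n, 1 ≤ j ≤ k) complex numbers. Set λ_{n+i} = λ_i for 1 ≤ i ≤ n, ξ_i = ξ(x,λ_i), ξ'(x,λ) = Σ_{j=1}^M j x_j λ^{j−1}, and define f_j : ℂ^M → ℂ by f_j(x) = Σ_{i=1}^n ((a_{ij}+b_{ij}) + λ_i b_{ij} ξ'(x,λ_i)) e^{ξ(x,λ_i)}. Let A be the 2n×k matrix whose i-th row is (a_{ij}+b_{ij})_j for 1 ≤ i ≤ n and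 whose (n+i)-th row is (λ_i b_{ij})_j for 1 ≤ i ≤ n, and let D = D(x) be the k×2n matrix with rows indexed by p = 0,…,k−1 whose (p,i) entry is λ_i^p for 1 ≤ i ≤ n and whose (p,n+i) entry is p λ_i^{p−1} + λ_i^p ξ'(x,λ_i) for 1 ≤ i ≤ n. Then the Wronskian with respect to x_1, det((∂^{p-1}/∂x_1^{p-1}) f_j(x))_{1≤p,j≤k}, equals Σ_{1≤i_1<⋯<i_k≤2n} A_{i_1,…,i_k} D_{i_1,…,i_k}(x) e^{ξ_{i_1}+⋯+ξ_{i_k}}, where A_{i_1,…,i_k} is the k×k minor of A on rows i_1,…,i_k and D_{i_1,…,i_k}(x) is the k×k minor of D(x) on columns i_1,…,i_k. -/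
/-!
On the line through `x` in the `x₁`-direction, each `f_j` is a finite sum of terms
`(α + β s) e^{ξ + λ s}` with `s = t - x₁`, and the `p`-th derivative of such a term at
`s = 0` is `(λ^p α + p λ^{p-1} β) e^{ξ}`. Hence the Wronskian matrix factors as
`D(x) · diag(e^{ξ_i}) · A`, and the Cauchy–Binet formula expands its determinant over the
`k`-element sets of columns of `D(x)`.
-/

open scoped Classical

noncomputable section

/-- `ξ(x,λ) = Σ_{j=1}^M x_j λ^j` for `x ∈ ℂ^M`. -/
def xiKP (M : ℕ) (x : Fin M → ℂ) (lam : ℂ) : ℂ :=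
  ∑ j : Fin M, x j * lam ^ ((j : ℕ) + 1)

/-- `ξ'(x,λ) = Σ_{j=1}^M j x_j λ^{j-1}`. -/
def xiKP' (M : ℕ) (x : Fin M → ℂ) (lam : ℂ) : ℂ :=
  ∑ j : Fin M, ((j : ℕ) + 1 : ℂ) * x j * lam ^ (j : ℕ)

/-- The parameters `λ_1,…,λ_n,λ_1,…,λ_n` (i.e. `λ_{n+i} = λ_i`). -/
def LamExt (n : ℕ) (lam : Fin n → ℂ) : Fin (n + n) → ℂ :=
  Fin.addCases lam lam

/-- The `2n×k` matrix `A` of formula (6.2). -/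
def Amat (n k : ℕ) (lam : Fin n → ℂ) (a b : Fin n → Fin k → ℂ) :
    Matrix (Fin (n + n)) (Fin k) ℂ :=
  Matrix.of fun i j =>
    Fin.addCases (fun i' => a i' j + b i' j) (fun i' => lam i' * b i' j) i

/-- The `k×2n` matrix `D(x)` with columns `v_k(λ_i)` and `w_k(λ_i)`. -/
def Dmat (n k M : ℕ) (lam : Fin n → ℂ) (x : Fin M → ℂ) :
    Matrix (Fin k) (Fin (n + n)) ℂ :=
  Matrix.of fun p i =>
    Fin.addCases (fun i' => lam i' ^ (p : ℕ))
      (fun i' => ((p : ℕ) : ℂ) * lam i' ^ ((p : ℕ) - 1) +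
        lam i' ^ (p : ℕ) * xiKP' M x (lam i')) i

namespace Finset

theorem sum_injective_eq_sum_strictMono_sum_perm {β ι : Type*} [AddCommMonoid β]
    [Fintype ι] [LinearOrder ι] {k : ℕ} (T : (Fin k → ι) → β) :
    ∑ f with Function.Injective f, T f
      = ∑ I with StrictMono I, ∑ σ : Equiv.Perm (Fin k), T (I ∘ σ) := by
  rw [← Finset.sum_product']
  symm
  refine Finset.sum_bij (fun Iσ _ => Iσ.1 ∘ Iσ.2) ?_ ?_ ?_ (fun _ _ => rfl)
  · rintro ⟨I, σ⟩ h
    simp only [mem_product, mem_filter, mem_univ, true_and, and_true] at h ⊢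
    exact h.injective.comp σ.injective
  · rintro ⟨I, σ⟩ hI ⟨I', σ'⟩ hI' h
    simp only [mem_product, mem_filter, mem_univ, true_and, and_true] at hI hI' h
    have hrange : Set.range I = Set.range I' := by
      rw [← EquivLike.range_comp I σ, ← EquivLike.range_comp I' σ', h]
    obtain rfl := (hI.range_inj hI').mp hrange
    obtain rfl : σ = σ' := Equiv.ext fun p => hI.injective (congrFun h p)
    rfl
  · intro f hf
    simp only [mem_filter, mem_univ, true_and] at hf
    refine ⟨(f ∘ Tuple.sort f, (Tuple.sort f)⁻¹), ?_, ?_⟩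
    · simpa using (Tuple.monotone_sort f).strictMono_of_injective
        (hf.comp (Tuple.sort f).injective)
    · ext p
      simp

end Finset

namespace Matrix

variable {R ι : Type*} [CommRing R] {k : ℕ}

theorem det_submatrix_id_eq_sum_perm (A : Matrix (Fin k) ι R) (I : Fin k → ι) :
    (A.submatrix id I).det = ∑ σ : Equiv.Perm (Fin k), σ.sign * ∏ p, A p (I (σ p)) := by
  rw [← det_transpose, det_apply']
  rfl

variable [Fintype ι]

theorem det_mul_eq_sum_prod_mul_det_submatrix [DecidableEq ι]
    (A : Matrix (Fin k) ι R) (B : Matrix ι (Fin k) R) :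
    (A * B).det = ∑ f : Fin k → ι, (∏ p, A p (f p)) * (B.submatrix f id).det := by
  have hrows : A * B = fun p => ∑ i, A p i • B i := by
    ext p j
    simp [mul_apply, Finset.sum_apply]
  rw [det, hrows, ← AlternatingMap.coe_multilinearMap, MultilinearMap.map_sum]
  exact Finset.sum_congr rfl fun f _ =>
    detRowAlternating.map_smul_univ (fun p => A p (f p)) (fun p => B (f p))

theorem det_mul_eq_sum_strictMono [LinearOrder ι]
    (A : Matrix (Fin k) ι R) (B : Matrix ι (Fin k) R) :
    (A * B).det = ∑ I : Fin k → ι,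
      if StrictMono I then (A.submatrix id I).det * (B.submatrix I id).det else 0 := by
  have hvanish : ∀ f : Fin k → ι, ¬ Function.Injective f → (B.submatrix f id).det = 0 := by
    intro f hf
    obtain ⟨p, q, hfpq, hpq⟩ : ∃ p q, f p = f q ∧ p ≠ q := by
      simpa [Function.Injective] using hf
    exact det_zero_of_row_eq hpq (by ext j; simp [hfpq])
  have hperm : ∀ (I : Fin k → ι) (σ : Equiv.Perm (Fin k)),
      (∏ p, A p ((I ∘ σ) p)) * (B.submatrix (I ∘ σ) id).det
        = (σ.sign * ∏ p, A p (I (σ p))) * (B.submatrix I id).det := by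
    intro I σ
    rw [show B.submatrix (I ∘ σ) id = (B.submatrix I id).submatrix σ id from rfl, det_permute]
    simp only [Function.comp_apply]
    ring
  rw [det_mul_eq_sum_prod_mul_det_submatrix, ← Finset.sum_filter_of_ne fun f _ h =>
      not_not.mp fun hf => h (by rw [hvanish f hf, mul_zero]),
    Finset.sum_injective_eq_sum_strictMono_sum_perm, Finset.sum_filter]
  refine Finset.sum_congr rfl fun I _ => ?_
  split_ifs
  · simp only [hperm, ← Finset.sum_mul, det_submatrix_id_eq_sum_perm]
  · rfl

theorem det_submatrix_diagonal_mul [DecidableEq ι]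
    (d : ι → R) (A : Matrix ι (Fin k) R) (I : Fin k → ι) :
    ((diagonal d * A).submatrix I id).det = (∏ p, d (I p)) * (A.submatrix I id).det := by
  rw [← det_mul_column]
  congr 1
  ext p q
  simp [diagonal_mul]

end Matrix

theorem hasDerivAt_affine_mul_cexp (c₀ c₁ γ ξ t₀ t : ℂ) :
    HasDerivAt (fun t => (c₀ + c₁ * (t - t₀)) * Complex.exp (ξ + γ * (t - t₀)))
      ((γ * c₀ + c₁ + γ * c₁ * (t - t₀)) * Complex.exp (ξ + γ * (t - t₀))) t := by
  have hlin : HasDerivAt (fun t : ℂ => t - t₀) 1 t := (hasDerivAt_id t).sub_const t₀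
  refine (((hlin.const_mul c₁).const_add c₀).mul
    ((hlin.const_mul γ).const_add ξ).cexp).congr_deriv ?_
  ring

theorem iteratedDeriv_sum_affine_mul_cexp {ι : Type*} (s : Finset ι) (α β γ ξ : ι → ℂ)
    (t₀ : ℂ) (p : ℕ) :
    iteratedDeriv p
        (fun t => ∑ i ∈ s, (α i + β i * (t - t₀)) * Complex.exp (ξ i + γ i * (t - t₀)))
      = fun t => ∑ i ∈ s,
          (γ i ^ p * α i + p * γ i ^ (p - 1) * β i + γ i ^ p * β i * (t - t₀)) *
            Complex.exp (ξ i + γ i * (t - t₀)) := by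
  induction p with
  | zero => simp
  | succ p ih =>
    rw [iteratedDeriv_succ, ih]
    funext t
    refine (HasDerivAt.fun_sum fun i _ =>
      hasDerivAt_affine_mul_cexp _ _ (γ i) (ξ i) t₀ t).deriv.trans
        (Finset.sum_congr rfl fun i _ => ?_)
    have hpow : γ i * (p * γ i ^ (p - 1)) = p * γ i ^ p := by
      cases p with
      | zero => simp
      | succ q => rw [Nat.add_sub_cancel, pow_succ]; ring
    push_cast
    linear_combination β i * Complex.exp (ξ i + γ i * (t - t₀)) * hpow

theorem xiKP_update (M : ℕ) (x : Fin M → ℂ) (j₀ : Fin M) (t lam : ℂ) :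
    xiKP M (Function.update x j₀ t) lam
      = xiKP M x lam + lam ^ ((j₀ : ℕ) + 1) * (t - x j₀) := by
  simp only [xiKP, Pi.update_eq_sub_add_single j₀ x t, Pi.add_apply, Pi.sub_apply,
    Pi.single_apply, add_mul, sub_mul, ite_mul, zero_mul, Finset.sum_add_distrib,
    Finset.sum_sub_distrib, Finset.sum_ite_eq', Finset.mem_univ, ↓reduceIte]
  ring

theorem xiKP'_update (M : ℕ) (x : Fin M → ℂ) (j₀ : Fin M) (t lam : ℂ) :
    xiKP' M (Function.update x j₀ t) lam
      = xiKP' M x lam + ((j₀ : ℕ) + 1 : ℂ) * lam ^ (j₀ : ℕ) * (t - x j₀) := by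
  simp only [xiKP', Pi.update_eq_sub_add_single j₀ x t, Pi.add_apply, Pi.sub_apply,
    Pi.single_apply, mul_add, mul_sub, add_mul, one_mul, mul_ite, mul_zero, sub_mul, ite_mul,
    zero_mul, Finset.sum_add_distrib, Finset.sum_sub_distrib, Finset.sum_ite_eq',
    Finset.mem_univ, ↓reduceIte]
  ring

theorem wronskian_eq_Dmat_mul_diagonal_mul_Amat (n k M : ℕ) (hM : 1 ≤ M) (lam : Fin n → ℂ)
    (a b : Fin n → Fin k → ℂ) (x : Fin M → ℂ) :
    (Matrix.of fun p j : Fin k =>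
        iteratedDeriv (p : ℕ)
          (fun t => ∑ i,
            ((a i j + b i j) +
                lam i * b i j * xiKP' M (Function.update x ⟨0, hM⟩ t) (lam i)) *
              Complex.exp (xiKP M (Function.update x ⟨0, hM⟩ t) (lam i)))
          (x ⟨0, hM⟩))
      = Dmat n k M lam x *
          (Matrix.diagonal (fun i => Complex.exp (xiKP M x (LamExt n lam i))) *
            Amat n k lam a b) := by
  ext p j
  have hline : (fun t => ∑ i,
      ((a i j + b i j) + lam i * b i j * xiKP' M (Function.update x ⟨0, hM⟩ t) (lam i)) *
        Complex.exp (xiKP M (Function.update x ⟨0, hM⟩ t) (lam i)))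
      = fun t => ∑ i, ((a i j + b i j + lam i * b i j * xiKP' M x (lam i)) +
          lam i * b i j * (t - x ⟨0, hM⟩)) *
            Complex.exp (xiKP M x (lam i) + lam i * (t - x ⟨0, hM⟩)) := by
    funext t
    refine Finset.sum_congr rfl fun i _ => ?_
    rw [xiKP_update, xiKP'_update]
    simp only [zero_add, Nat.cast_zero, pow_zero, pow_one, one_mul]
    ring
  rw [Matrix.of_apply, hline, iteratedDeriv_sum_affine_mul_cexp, Matrix.mul_apply,
    Fin.sum_univ_add, ← Finset.sum_add_distrib]
  refine Finset.sum_congr rfl fun i _ => ?_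
  simp only [Dmat, Amat, LamExt, Matrix.diagonal_mul, Matrix.of_apply, Fin.addCases_left,
    Fin.addCases_right]
  simp only [sub_self, mul_zero, add_zero]
  ring

theorem GS_2n_k_wronskian_expansion_general (n k M : ℕ) (hM : 1 ≤ M)
    (lam : Fin n → ℂ) (a b : Fin n → Fin k → ℂ) (x : Fin M → ℂ) :
    Matrix.det (Matrix.of fun p j : Fin k =>
        iteratedDeriv (p : ℕ)
          (fun t => ∑ i,
            ((a i j + b i j) +
                lam i * b i j * xiKP' M (Function.update x ⟨0, hM⟩ t) (lam i)) *
              Complex.exp (xiKP M (Function.update x ⟨0, hM⟩ t) (lam i)))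
          (x ⟨0, hM⟩)) =
      ∑ I : Fin k → Fin (n + n),
        if StrictMono I then
          Matrix.det (Matrix.of fun p q : Fin k => Amat n k lam a b (I p) q) *
            Matrix.det (Matrix.of fun p q : Fin k => Dmat n k M lam x p (I q)) *
            Complex.exp (∑ p : Fin k, xiKP M x (LamExt n lam (I p)))
        else 0 := by
  rw [wronskian_eq_Dmat_mul_diagonal_mul_Amat, Matrix.det_mul_eq_sum_strictMono]
  refine Finset.sum_congr rfl fun I _ => ?_
  split_ifs
  · rw [Matrix.det_submatrix_diagonal_mul, Complex.exp_sum]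
    simp only [Matrix.submatrix, id]
    ring
  · rfl

/-- formula (6.3): the Wronskian expansion of the `(2n,k)`
generalized soliton tau function. -/
theorem GS_2n_k_wronskian_expansion (n k M : ℕ) (hk : 1 ≤ k) (hkn : k ≤ n) (hM : 1 ≤ M)
    (lam : Fin n → ℂ) (hne : ∀ i, lam i ≠ 0) (hinj : Function.Injective lam)
    (a b : Fin n → Fin k → ℂ) (x : Fin M → ℂ) :
    Matrix.det (Matrix.of fun p j : Fin k =>
        iteratedDeriv (p : ℕ)
          (fun t => ∑ i,
            ((a i j + b i j) +
                lam i * b i j * xiKP' M (Function.update x ⟨0, hM⟩ t) (lam i)) *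
              Complex.exp (xiKP M (Function.update x ⟨0, hM⟩ t) (lam i)))
          (x ⟨0, hM⟩)) =
      ∑ I : Fin k → Fin (n + n),
        if StrictMono I then
          Matrix.det (Matrix.of fun p q : Fin k => Amat n k lam a b (I p) q) *
            Matrix.det (Matrix.of fun p q : Fin k => Dmat n k M lam x p (I q)) *
            Complex.exp (∑ p : Fin k, xiKP M x (LamExt n lam (I p)))
        else 0 :=
  GS_2n_k_wronskian_expansion_general n k M hM lam a b x

end
end

section
/- With the trigonal degeneration data, for each r ∈ {1,2}, each 1 ≤ j ≤ m, and every z ∈ ℂ with ∏_{l=1}^m (1−λ_l³ z³) ≠ 0, one has the partial fraction identity z^{3m−3j+r} / ∏_{l=1}^m (1−λ_l³ z³) = Σ_{i=1}^{3m} a^{(r)}_{ij} / (1−λ_i z). -/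
/-!
Since `(ωᶜ t)³ = t³`, each `(1 - t³) / (1 - ωᶜ t)` is the geometric sum `∑_{k<3} (ωᶜ t)^k`, and
the orthogonality `∑_c ω^{(k - r) c} = 3 [k = r]` collapses the three terms belonging to
`λ_i, ωλ_i, ω²λ_i` to `3 (λ_i z)^r / (1 - λ_i³ z³)`. What remains is the partial fraction
decomposition of `w^{m-1-j} / ∏_l (1 - μ_l w)` with `μ_l = λ_l³` and `w = z³`, which is Lagrange
interpolation of `X^j` at the nodes `μ_l`, evaluated at `X = w⁻¹`.
-/

noncomputable section

/-- `ω = e^{2πi/3}`. -/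
def omg : ℂ := Complex.exp (2 * Real.pi * Complex.I / 3)

/-- The `3m` parameters `(λ_1,…,λ_m, ωλ_1,…,ωλ_m, ω²λ_1,…,ω²λ_m)`, indexed by
pairs `(c, i) ∈ Fin 3 × Fin m` via `λ_{(c,i)} = ω^c λ_i`. -/
def LamT (m : ℕ) (lam : Fin m → ℂ) : Fin 3 × Fin m → ℂ :=
  fun ci => omg ^ (ci.1 : ℕ) * lam ci.2

/-- The coefficients `a⁽⁰⁾_{ij}` of Theorem 9.1 (with rows `i = (c, i')`,
`a⁽⁰⁾_{(c,i')j} = ω^c a⁽⁰⁾_{i'j}`); `j` is `0`-based, so `j+1` is the `j` of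
the paper and `λ_{i}^{3j-8} = λ_i^{3(j+1)-8}`. -/
def a0T (m : ℕ) (lam : Fin m → ℂ) : Fin 3 × Fin m → Fin m → ℂ :=
  fun ci j =>
    omg ^ (ci.1 : ℕ) *
      (-((2 * (m : ℂ) - ((j : ℕ) + 1) +
            2 * ∑ l ∈ Finset.univ.erase ci.2, lam l ^ 3 / (lam ci.2 ^ 3 - lam l ^ 3)) *
          (lam ci.2 ^ (3 * ((j : ℕ) : ℤ) + 3 - 8) /
            (3 * ∏ l ∈ Finset.univ.erase ci.2, (lam ci.2 ^ 3 - lam l ^ 3) ^ 2))))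

/-- The coefficients `b⁽⁰⁾_{ij}` of Theorem 9.1. -/
def b0T (m : ℕ) (lam : Fin m → ℂ) : Fin 3 × Fin m → Fin m → ℂ :=
  fun ci j =>
    omg ^ (ci.1 : ℕ) *
      (lam ci.2 ^ (3 * ((j : ℕ) : ℤ) + 3 - 8) /
        (9 * ∏ l ∈ Finset.univ.erase ci.2, (lam ci.2 ^ 3 - lam l ^ 3) ^ 2))

/-- The coefficients `a⁽ʳ⁾_{ij}` (`r = 1, 2`) of Theorem 9.1, with
`a⁽ʳ⁾_{(c,i')j} = ω^{-rc} a⁽ʳ⁾_{i'j}`. -/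
def arT (m : ℕ) (lam : Fin m → ℂ) (r : ℕ) : Fin 3 × Fin m → Fin m → ℂ :=
  fun ci j =>
    omg ^ (-(r : ℤ) * ((ci.1 : ℕ) : ℤ)) *
      (lam ci.2 ^ (3 * ((j : ℕ) : ℤ) + 3 - 3 - (r : ℤ)) /
        (3 * ∏ l ∈ Finset.univ.erase ci.2, (lam ci.2 ^ 3 - lam l ^ 3)))

namespace IsPrimitiveRoot

open Finset

variable {K : Type*} [Field K] {ζ : K} {n : ℕ}

theorem sum_range_zpow_mul (hζ : IsPrimitiveRoot ζ n) (l : ℤ) :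
    ∑ c ∈ range n, ζ ^ (l * c) = if (n : ℤ) ∣ l then (n : K) else 0 := by
  simp_rw [zpow_mul, zpow_natCast]
  split_ifs with hl
  · simp [(hζ.zpow_eq_one_iff_dvd l).2 hl]
  · have hpow : (ζ ^ l) ^ n = 1 := by
      rw [← zpow_natCast, ← zpow_mul, mul_comm, zpow_mul, zpow_natCast, hζ.pow_eq_one, one_zpow]
    rw [geom_sum_eq (mt (hζ.zpow_eq_one_iff_dvd l).1 hl), hpow, sub_self, zero_div]

theorem sum_zpow_neg_mul_div_one_sub_mul (hζ : IsPrimitiveRoot ζ n) {r : ℕ} (hr : r < n)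
    {t : K} (ht : 1 - t ^ n ≠ 0) :
    ∑ c ∈ range n, ζ ^ (-(r : ℤ) * c) / (1 - ζ ^ c * t) = n * t ^ r / (1 - t ^ n) := by
  have hζ0 : ζ ≠ 0 := hζ.ne_zero (by omega)
  have hroot (c : ℕ) : (ζ ^ c * t) ^ n = t ^ n := by
    rw [mul_pow, ← pow_mul, mul_comm c, pow_mul, hζ.pow_eq_one, one_pow, one_mul]
  have hgeom (c : ℕ) : (1 - t ^ n) / (1 - ζ ^ c * t) = ∑ k ∈ range n, (ζ ^ c * t) ^ k := by
    have hden : 1 - ζ ^ c * t ≠ 0 := fun h =>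
      ht (by rw [← hroot, ← sub_eq_zero.1 h, one_pow, sub_self])
    rw [div_eq_iff hden, mul_comm, mul_neg_geom_sum, hroot]
  rw [eq_div_iff ht, sum_mul]
  calc ∑ c ∈ range n, ζ ^ (-(r : ℤ) * c) / (1 - ζ ^ c * t) * (1 - t ^ n)
      = ∑ c ∈ range n, ∑ k ∈ range n, t ^ k * ζ ^ (((k : ℤ) - r) * c) := by
        refine sum_congr rfl fun c _ => ?_
        rw [div_mul_eq_mul_div, mul_div_assoc, hgeom, mul_sum]
        refine sum_congr rfl fun k _ => ?_
        rw [mul_pow, ← pow_mul, mul_comm c k, ← zpow_natCast, sub_mul, zpow_sub₀ hζ0, neg_mul,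
          zpow_neg]
        push_cast
        ring
    _ = ∑ k ∈ range n, t ^ k * if (n : ℤ) ∣ (k : ℤ) - r then (n : K) else 0 := by
        rw [sum_comm]
        simp_rw [← mul_sum, hζ.sum_range_zpow_mul]
    _ = n * t ^ r := by
        rw [sum_eq_single_of_mem r (mem_range.2 hr), sub_self, if_pos (dvd_zero _), mul_comm]
        intro k hk hkr
        rw [if_neg, mul_zero]
        intro hdvd
        have hlt : |(k : ℤ) - r| < n := abs_sub_lt_iff.2 ⟨by simp at hk; omega, by omega⟩
        exact hkr (by have := Int.eq_zero_of_abs_lt_dvd hdvd hlt; omega)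

end IsPrimitiveRoot

namespace Lagrange

open Finset Polynomial

variable {F : Type*} [Field F] {ι : Type*} [DecidableEq ι] {s : Finset ι} {v : ι → F}

theorem sum_pow_div_prod_sub_div_one_sub_mul (hvs : Set.InjOn v s) {j : ℕ} (hj : j < #s)
    {w : F} (hw : ∀ i ∈ s, 1 - v i * w ≠ 0) :
    ∑ i ∈ s, v i ^ j / (∏ l ∈ s.erase i, (v i - v l)) / (1 - v i * w) =
      w ^ (#s - 1 - j) / ∏ i ∈ s, (1 - v i * w) := by
  have hdeg : (X ^ j : F[X]).degree < #s := by rw [degree_X_pow]; exact_mod_cast hj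
  rcases eq_or_ne w 0 with rfl | hw0
  · -- at `w = 0` the identity reads off the coefficient of `X ^ (#s - 1)` in `X ^ j`
    have hcoeff := coeff_eq_sum hvs hdeg
    simp only [eval_pow, eval_X, coeff_X_pow] at hcoeff
    simp only [mul_zero, sub_zero, div_one, prod_const_one, ← hcoeff, zero_pow_eq]
    split_ifs <;> simp <;> omega
  · -- otherwise evaluate the barycentric form of `X ^ j = interpolate s v (v · ^ j)` at `w⁻¹`
    obtain ⟨x, rfl⟩ : ∃ x, w = x⁻¹ := ⟨w⁻¹, (inv_inv w).symm⟩
    have hx0 : x ≠ 0 := by simpa using hw0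
    have hfac (i : ι) : 1 - v i * x⁻¹ = (x - v i) / x := by field_simp
    have hnode : ∀ i ∈ s, x ≠ v i := fun i hi h => hw i hi (by rw [hfac, h, sub_self, zero_div])
    have key := congrArg (eval x) (eq_interpolate hvs hdeg)
    rw [eval_interpolate_not_at_node _ hnode, eval_nodal] at key
    simp only [eval_pow, eval_X, nodalWeight, prod_inv_distrib] at key
    have hP : ∏ i ∈ s, (x - v i) ≠ 0 := prod_ne_zero_iff.2 fun i hi => sub_ne_zero.2 (hnode i hi)
    have hsum : ∑ i ∈ s, (∏ l ∈ s.erase i, (v i - v l))⁻¹ * (x - v i)⁻¹ * v i ^ j =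
        x ^ j / ∏ i ∈ s, (x - v i) := by
      rw [eq_div_iff hP, mul_comm, ← key]
    obtain ⟨N, hN⟩ : ∃ N, #s = N + j + 1 := ⟨#s - 1 - j, by omega⟩
    rw [prod_congr rfl fun i _ => hfac i, prod_div_distrib, prod_const, hN,
      show N + j + 1 - 1 - j = N by omega]
    calc ∑ i ∈ s, v i ^ j / (∏ l ∈ s.erase i, (v i - v l)) / (1 - v i * x⁻¹)
        = x * ∑ i ∈ s, (∏ l ∈ s.erase i, (v i - v l))⁻¹ * (x - v i)⁻¹ * v i ^ j := by
          rw [mul_sum]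
          exact sum_congr rfl fun i _ => by rw [hfac i, div_div_eq_mul_div]; ring
      _ = x⁻¹ ^ N / ((∏ i ∈ s, (x - v i)) / x ^ (N + j + 1)) := by
          rw [hsum, inv_pow]
          field_simp
          ring

end Lagrange

theorem isPrimitiveRoot_omg : IsPrimitiveRoot omg 3 := by
  simpa [omg] using Complex.isPrimitiveRoot_exp 3 (by norm_num)

theorem sum_arT_div_one_sub_LamT_mul {m : ℕ} (lam : Fin m → ℂ) {i : Fin m} (hi : lam i ≠ 0)
    {r : ℕ} (hr : r < 3) (j : Fin m) {z : ℂ} (hz : 1 - lam i ^ 3 * z ^ 3 ≠ 0) :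
    ∑ c : Fin 3, arT m lam r (c, i) j / (1 - LamT m lam (c, i) * z) =
      z ^ r * ((lam i ^ 3) ^ (j : ℕ) / (∏ l ∈ Finset.univ.erase i, (lam i ^ 3 - lam l ^ 3)) /
        (1 - lam i ^ 3 * z ^ 3)) := by
  set D := ∏ l ∈ Finset.univ.erase i, (lam i ^ 3 - lam l ^ 3)
  have hpow : lam i ^ (3 * ((j : ℕ) : ℤ) + 3 - 3 - r) * lam i ^ r = (lam i ^ 3) ^ (j : ℕ) := by
    rw [← zpow_natCast (lam i) r, ← zpow_add₀ hi, ← pow_mul, ← zpow_natCast]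
    congr 1
    push_cast
    ring
  have hsum := isPrimitiveRoot_omg.sum_zpow_neg_mul_div_one_sub_mul hr (t := lam i * z)
    (by rwa [mul_pow])
  rw [← Fin.sum_univ_eq_sum_range
    (fun c => omg ^ (-(r : ℤ) * c) / (1 - omg ^ c * (lam i * z))) 3] at hsum
  calc ∑ c : Fin 3, arT m lam r (c, i) j / (1 - LamT m lam (c, i) * z)
      = lam i ^ (3 * ((j : ℕ) : ℤ) + 3 - 3 - r) / (3 * D) *
          ∑ c : Fin 3, omg ^ (-(r : ℤ) * (c : ℕ)) / (1 - omg ^ (c : ℕ) * (lam i * z)) := by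
        rw [Finset.mul_sum]
        refine Finset.sum_congr rfl fun c _ => ?_
        simp only [arT, LamT]
        ring
    _ = lam i ^ (3 * ((j : ℕ) : ℤ) + 3 - 3 - r) / (3 * D) *
          (3 * (lam i * z) ^ r / (1 - (lam i * z) ^ 3)) := by
        rw [hsum, Nat.cast_ofNat]
    _ = _ := by
        rw [mul_pow, mul_pow, ← hpow]
        ring

theorem partial_fraction_simple_pole_general (m : ℕ)
    (lam : Fin m → ℂ) (hne : ∀ i, lam i ≠ 0)
    (hinj : Function.Injective fun i => lam i ^ 3)
    (r : ℕ) (hr : r = 1 ∨ r = 2) (j : Fin m) (z : ℂ)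
    (hz : ∏ l : Fin m, (1 - lam l ^ 3 * z ^ 3) ≠ 0) :
    z ^ (3 * m - 3 * ((j : ℕ) + 1) + r) / ∏ l : Fin m, (1 - lam l ^ 3 * z ^ 3) =
      ∑ i : Fin 3 × Fin m, arT m lam r i j / (1 - LamT m lam i * z) := by
  have hfac (l : Fin m) : 1 - lam l ^ 3 * z ^ 3 ≠ 0 :=
    Finset.prod_ne_zero_iff.1 hz l (Finset.mem_univ l)
  have hpf := Lagrange.sum_pow_div_prod_sub_div_one_sub_mul (s := Finset.univ)
    (v := fun i => lam i ^ 3) hinj.injOn (j := j) (by simp) (w := z ^ 3) fun l _ => hfac l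
  rw [Finset.card_univ, Fintype.card_fin] at hpf
  calc z ^ (3 * m - 3 * ((j : ℕ) + 1) + r) / ∏ l : Fin m, (1 - lam l ^ 3 * z ^ 3)
      = z ^ r * ((z ^ 3) ^ (m - 1 - j) / ∏ l : Fin m, (1 - lam l ^ 3 * z ^ 3)) := by
        rw [← mul_div_assoc, ← pow_mul, ← pow_add]
        congr 2
        omega
    _ = ∑ i : Fin m, ∑ c : Fin 3, arT m lam r (c, i) j / (1 - LamT m lam (c, i) * z) := by
        rw [← hpf, Finset.mul_sum]
        exact Finset.sum_congr rfl fun i _ =>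
          (sum_arT_div_one_sub_LamT_mul lam (hne i) (by omega) j (hfac i)).symm
    _ = ∑ i : Fin 3 × Fin m, arT m lam r i j / (1 - LamT m lam i * z) :=
        (Fintype.sum_prod_type_right fun i => arT m lam r i j / (1 - LamT m lam i * z)).symm

/-- the simple-pole partial fractions in Theorem 9.1:
`z^{3m-3j+r} / ∏_{l=1}^m (1-λ_l³z³) = Σ_{i=1}^{3m} a⁽ʳ⁾_{ij}/(1-λ_iz)` for
`r = 1, 2` (here `j` is `0`-based, i.e. `j+1` is the `j` of the paper). -/
theorem partial_fraction_simple_pole (m : ℕ) (hm : 1 ≤ m)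
    (lam : Fin m → ℂ) (hne : ∀ i, lam i ≠ 0)
    (hinj : Function.Injective fun i => lam i ^ 3)
    (r : ℕ) (hr : r = 1 ∨ r = 2) (j : Fin m) (z : ℂ)
    (hz : ∏ l : Fin m, (1 - lam l ^ 3 * z ^ 3) ≠ 0) :
    z ^ (3 * m - 3 * ((j : ℕ) + 1) + r) / ∏ l : Fin m, (1 - lam l ^ 3 * z ^ 3) =
      ∑ i : Fin 3 × Fin m, arT m lam r i j / (1 - LamT m lam i * z) :=
  partial_fraction_simple_pole_general m lam hne hinj r hr j z hz

end
end
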